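/- Let K ≥ 2 be an integer, λ > 0 a real, and for each k = 1,…,K let m_k ≥ 1, n_k ≥ m_k be integers, μ_k > 0 a real, and φ_k : [0,∞) → ℝ defined by φ_k(0) = 0 and φ_k(t) = t·B_{m_k,n_k}(t/μ_k) for t > 0. Then every minimizer (λ_1*,…,λ_K*) of ∑_{k=1}^K φ_k(λ_k) over vectors with λ_k ∈ [0,λ] for each k and ∑_{k=1}^K λ_k = λ satisfies 0 < λ_k* < λ for every k. -/

import Mathlib

/-- `a_j(r)` coefficients of the M/M/m/n queue. -/
noncomputable def aCoef (m j : ℕ) (r : ℝ) : ℝ :=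
  if j ≤ m then r ^ j / (Nat.factorial j : ℝ)
  else (r ^ m / (Nat.factorial m : ℝ)) * (r / (m : ℝ)) ^ (j - m)

/-- Blocking probability `B_{m,n}(r)` of the M/M/m/n queue with offered load `r`. -/
noncomputable def Bmn (m n : ℕ) (r : ℝ) : ℝ :=
  aCoef m n r / ∑ j ∈ Finset.range (n + 1), aCoef m j r

/-- Mean number in system `L_{m,n}(r)` of the M/M/m/n queue with offered load `r`. -/
noncomputable def Lmn (m n : ℕ) (r : ℝ) : ℝ :=
  (∑ j ∈ Finset.range (n + 1), (j : ℝ) * aCoef m j r) /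
    ∑ j ∈ Finset.range (n + 1), aCoef m j r

/-- Erlang-B formula `B_m(r)`. -/
noncomputable def erlangB (m : ℕ) (r : ℝ) : ℝ :=
  (r ^ m / (Nat.factorial m : ℝ)) / ∑ j ∈ Finset.range (m + 1), r ^ j / (Nat.factorial j : ℝ)

/-!
Each cost `φ_k(t) = t B_{m_k,n_k}(t / μ_k)` is flat at `0`, because `B_{m,n}(r) → 0` as `r → 0`,
while `B_{m,n}` is positive and increasing, so removing `ε` of traffic from a queue with positive
load saves at least a fixed multiple of `ε`. At a minimizer with an empty queue, shifting a little
traffic onto it from a loaded queue would therefore lower the total cost. So every load is positive,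
and since there are at least two queues, every load is below `λ`.
-/

open Filter Topology Set Finset

lemma pow_mul_pow_le_pow_mul_pow {a b : ℝ} (ha : 0 ≤ a) (hab : a ≤ b) {j n : ℕ} (hjn : j ≤ n) :
    a ^ n * b ^ j ≤ b ^ n * a ^ j := by
  obtain ⟨t, rfl⟩ := Nat.exists_eq_add_of_le hjn
  have hb : 0 ≤ b := ha.trans hab
  calc a ^ (j + t) * b ^ j = a ^ j * b ^ j * a ^ t := by ring
    _ ≤ a ^ j * b ^ j * b ^ t := by gcongr
    _ = b ^ (j + t) * a ^ j := by ring

lemma sub_mul_le_mul_sub_mul {g : ℝ → ℝ} (hg : MonotoneOn g (Ici 0)) {x y : ℝ} (hy : 0 ≤ y)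
    (hyx : y ≤ x) : (x - y) * g y ≤ x * g x - y * g y := by
  nlinarith [hg hy (hy.trans hyx) hyx]

section Queue

variable {m n : ℕ}

lemma aCoef_eq_mul_pow (m j : ℕ) (r : ℝ) : aCoef m j r = aCoef m j 1 * r ^ j := by
  unfold aCoef
  split_ifs with h
  · ring
  · rw [show r ^ j = r ^ m * r ^ (j - m) by rw [← pow_add, Nat.add_sub_cancel' (by omega)]]
    ring

lemma aCoef_nonneg (m j : ℕ) {r : ℝ} (hr : 0 ≤ r) : 0 ≤ aCoef m j r := by
  unfold aCoef
  split_ifs <;> positivity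

lemma aCoef_pos (hm : 1 ≤ m) (j : ℕ) {r : ℝ} (hr : 0 < r) : 0 < aCoef m j r := by
  have : (0 : ℝ) < m := by exact_mod_cast hm
  unfold aCoef
  split_ifs <;> positivity

lemma continuous_aCoef (m j : ℕ) : Continuous (aCoef m j) := by
  unfold aCoef
  split_ifs <;> fun_prop

lemma one_le_sum_aCoef (m n : ℕ) {r : ℝ} (hr : 0 ≤ r) :
    1 ≤ ∑ j ∈ range (n + 1), aCoef m j r :=
  calc (1 : ℝ) = aCoef m 0 r := by simp [aCoef]
    _ ≤ _ := single_le_sum (fun j _ => aCoef_nonneg m j hr) (by simp)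

lemma Bmn_pos (hm : 1 ≤ m) (n : ℕ) {r : ℝ} (hr : 0 < r) : 0 < Bmn m n r :=
  div_pos (aCoef_pos hm n hr) (one_pos.trans_le (one_le_sum_aCoef m n hr.le))

/-- Dividing through by `r ^ n`, `1 / B_{m,n}(r) = ∑_{j ≤ n} (a_j(1) / a_n(1)) r^{j - n}` is a sum
of nonincreasing terms. -/
lemma monotoneOn_Bmn (m n : ℕ) : MonotoneOn (Bmn m n) (Ici 0) := by
  intro r hr s hs hrs
  have hr : (0 : ℝ) ≤ r := hr
  unfold Bmn
  rw [div_le_div_iff₀ (one_pos.trans_le (one_le_sum_aCoef m n hr))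
    (one_pos.trans_le (one_le_sum_aCoef m n (hr.trans hrs))), mul_sum, mul_sum]
  refine sum_le_sum fun j hj => ?_
  rw [aCoef_eq_mul_pow m n r, aCoef_eq_mul_pow m n s, aCoef_eq_mul_pow m j r,
    aCoef_eq_mul_pow m j s]
  have := pow_mul_pow_le_pow_mul_pow hr hrs (Nat.lt_succ_iff.mp (mem_range.mp hj))
  have := mul_nonneg (aCoef_nonneg m n zero_le_one) (aCoef_nonneg m j zero_le_one)
  nlinarith

lemma tendsto_Bmn_zero (hn : 1 ≤ n) (m : ℕ) : Tendsto (Bmn m n) (𝓝 0) (𝓝 0) := by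
  have hden : ∑ j ∈ range (n + 1), aCoef m j 0 ≠ 0 :=
    (one_pos.trans_le (one_le_sum_aCoef m n le_rfl)).ne'
  have hcont : ContinuousAt (Bmn m n) 0 := (continuous_aCoef m n).continuousAt.div
    (continuous_finsetSum _ fun j _ => continuous_aCoef m j).continuousAt hden
  have hB0 : Bmn m n 0 = 0 := by
    simp [Bmn, aCoef_eq_mul_pow m n 0, zero_pow (by omega : n ≠ 0)]
  simpa only [hB0] using hcont.tendsto

lemma eventually_mul_Bmn_div_lt (hn : 1 ≤ n) (m : ℕ) (μ : ℝ) {c : ℝ} (hc : 0 < c) :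
    ∀ᶠ t in 𝓝[>] 0, t * Bmn m n (t / μ) < c * t := by
  have hB : Tendsto (fun t => Bmn m n (t / μ)) (𝓝[>] 0) (𝓝 0) :=
    (tendsto_Bmn_zero hn m).comp <| by
      simpa using ((continuous_id.div_const μ).tendsto 0).mono_left nhdsWithin_le_nhds
  filter_upwards [self_mem_nhdsWithin, (tendsto_order.1 hB).2 c hc] with t (ht : 0 < t) hBt
  nlinarith

/-- One can take `c = B_{m,n}(x / (2 μ))`, for `ε ≤ x / 2`. -/
lemma exists_mul_le_mul_Bmn_div_sub (hm : 1 ≤ m) (n : ℕ) {μ : ℝ} (hμ : 0 < μ) {x : ℝ}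
    (hx : 0 < x) :
    ∃ c > 0, ∀ᶠ ε in 𝓝[>] 0,
      c * ε ≤ x * Bmn m n (x / μ) - (x - ε) * Bmn m n ((x - ε) / μ) := by
  have hmono : MonotoneOn (fun t => Bmn m n (t / μ)) (Ici 0) := fun s hs t ht hst =>
    monotoneOn_Bmn m n (div_nonneg hs hμ.le) (div_nonneg ht hμ.le) (by gcongr)
  refine ⟨Bmn m n (x / 2 / μ), Bmn_pos hm n (by positivity), ?_⟩
  filter_upwards [Ioc_mem_nhdsGT (half_pos hx)] with ε ⟨hε0, hεx⟩
  have hsave := sub_mul_le_mul_sub_mul hmono (by linarith : 0 ≤ x - ε) (by linarith : x - ε ≤ x)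
  have hc := hmono (by positivity : 0 ≤ x / 2) (by linarith : 0 ≤ x - ε) (by linarith)
  simp only [sub_sub_cancel] at hsave hc
  nlinarith

end Queue

section Allocation

variable {ι : Type*} [Fintype ι] [DecidableEq ι] {lam : ℝ} {v : ι → ℝ}

lemma sum_sub_sum_eq_of_eq_of_ne {f g : ι → ℝ} {j k : ι} (hjk : j ≠ k)
    (h : ∀ i, i ≠ j → i ≠ k → f i = g i) :
    ∑ i, f i - ∑ i, g i = (f j - g j) + (f k - g k) := by
  rw [← sum_add_sum_compl {j, k} f, ← sum_add_sum_compl {j, k} g, sum_pair hjk, sum_pair hjk,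
    sum_congr rfl fun i hi => h i (by simp_all) (by simp_all)]
  ring

lemma sub_le_sub_of_isMin (φ : ι → ℝ → ℝ)
    (hfeas : (∀ k, v k ∈ Icc (0 : ℝ) lam) ∧ ∑ k, v k = lam)
    (hmin : ∀ w : ι → ℝ, ((∀ k, w k ∈ Icc (0 : ℝ) lam) ∧ ∑ k, w k = lam) →
      ∑ k, φ k (v k) ≤ ∑ k, φ k (w k))
    {j k : ι} (hjk : j ≠ k) {ε : ℝ} (hε : 0 ≤ ε) (hεj : ε ≤ v j) :
    φ j (v j) - φ j (v j - ε) ≤ φ k (v k + ε) - φ k (v k) := by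
  set w : ι → ℝ := v + Pi.single k ε - Pi.single j ε
  have hwj : w j = v j - ε := by simp [w, hjk]
  have hwk : w k = v k + ε := by simp [w, hjk.symm]
  have hw : ∀ i, i ≠ j → i ≠ k → w i = v i := fun i hij hik => by simp [w, hij, hik]
  have hwsum : ∑ i, w i = lam := by
    simp [w, sum_add_distrib, sum_sub_distrib, hfeas.2]
  have hw0 : ∀ i, 0 ≤ w i := fun i => by
    by_cases hij : i = j
    · subst hij; rw [hwj]; linarith
    by_cases hik : i = k
    · subst hik; rw [hwk]; linarith [(hfeas.1 i).1]
    · rw [hw i hij hik]; exact (hfeas.1 i).1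
  have hwfeas : (∀ i, w i ∈ Icc (0 : ℝ) lam) ∧ ∑ i, w i = lam :=
    ⟨fun i => ⟨hw0 i, hwsum ▸ single_le_sum (fun i _ => hw0 i) (mem_univ i)⟩, hwsum⟩
  have hdiff := sum_sub_sum_eq_of_eq_of_ne (f := fun i => φ i (w i)) (g := fun i => φ i (v i))
    hjk fun i hij hik => by simp only [hw i hij hik]
  simp only [hwj, hwk] at hdiff
  linarith [hmin w hwfeas]

theorem pos_and_lt_of_isMin [Nontrivial ι] (hlam : 0 < lam) (φ : ι → ℝ → ℝ)
    (hflat : ∀ k, ∀ c > 0, ∀ᶠ t in 𝓝[>] 0, φ k t - φ k 0 < c * t)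
    (hsave : ∀ k, ∀ x > 0, ∃ c > 0, ∀ᶠ ε in 𝓝[>] 0, c * ε ≤ φ k x - φ k (x - ε))
    (hfeas : (∀ k, v k ∈ Icc (0 : ℝ) lam) ∧ ∑ k, v k = lam)
    (hmin : ∀ w : ι → ℝ, ((∀ k, w k ∈ Icc (0 : ℝ) lam) ∧ ∑ k, w k = lam) →
      ∑ k, φ k (v k) ≤ ∑ k, φ k (w k)) :
    ∀ k, 0 < v k ∧ v k < lam := by
  have hpos : ∀ k, 0 < v k := by
    intro k
    by_contra! hk
    have hvk : v k = 0 := le_antisymm hk (hfeas.1 k).1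
    obtain ⟨j, -, hj⟩ :=
      exists_lt_of_sum_lt (s := univ) (f := 0) (g := v) (by simp [hfeas.2, hlam])
    have hjk : j ≠ k := by rintro rfl; simp_all
    obtain ⟨c, hc, hsave_j⟩ := hsave j (v j) hj
    obtain ⟨ε, hε_save, hε_flat, hε0, hεj⟩ :=
      (hsave_j.and ((hflat k c hc).and (Ioc_mem_nhdsGT hj))).exists
    have := sub_le_sub_of_isMin φ hfeas hmin hjk hε0.le hεj
    rw [hvk, zero_add] at this
    linarith
  intro k
  obtain ⟨j, hjk⟩ := exists_ne k
  exact ⟨hpos k, hfeas.2 ▸ single_lt_sum hjk (mem_univ k) (mem_univ j) (hpos j)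
    fun i _ _ => (hpos i).le⟩

end Allocation

/-- every OBS minimizer routes a positive fraction of traffic to every queue. -/
theorem stmt_11 (K : ℕ) (hK : 2 ≤ K) (lam : ℝ) (hlam : 0 < lam)
    (m n : Fin K → ℕ) (μ : Fin K → ℝ)
    (hm : ∀ k, 1 ≤ m k) (hn : ∀ k, m k ≤ n k) (hμ : ∀ k, 0 < μ k)
    (φ : Fin K → ℝ → ℝ) (hφ0 : ∀ k, φ k 0 = 0)
    (hφ : ∀ k, ∀ t : ℝ, 0 < t → φ k t = t * Bmn (m k) (n k) (t / μ k))
    (v : Fin K → ℝ)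
    (hfeas : (∀ k, v k ∈ Set.Icc (0 : ℝ) lam) ∧ ∑ k, v k = lam)
    (hmin : ∀ w : Fin K → ℝ, ((∀ k, w k ∈ Set.Icc (0 : ℝ) lam) ∧ ∑ k, w k = lam) →
      ∑ k, φ k (v k) ≤ ∑ k, φ k (w k)) :
    ∀ k, 0 < v k ∧ v k < lam := by
  have : Nontrivial (Fin K) := Fin.nontrivial_iff_two_le.mpr hK
  refine pos_and_lt_of_isMin hlam φ (fun k c hc => ?_) (fun k x hx => ?_) hfeas hmin
  · filter_upwards [self_mem_nhdsWithin,
      eventually_mul_Bmn_div_lt ((hm k).trans (hn k)) (m k) (μ k) hc] with t (ht : 0 < t) h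
    rwa [hφ0, sub_zero, hφ k t ht]
  · obtain ⟨c, hc, h⟩ := exists_mul_le_mul_Bmn_div_sub (hm k) (n k) (hμ k) hx
    refine ⟨c, hc, ?_⟩
    filter_upwards [h, Ioo_mem_nhdsGT hx] with ε h ⟨_, hεx⟩
    rwa [hφ k x hx, hφ k (x - ε) (by linarith)]
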